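/- For every prime p, there are infinitely many indices n such that p divides a(n), where a is the Yellowstone sequence. -/

import Mathlib

/-- The Yellowstone sequence: a 1 = 1, a 2 = 2, a 3 = 3, and for n ≥ 4,
`a n` is the least positive integer not among `a 1, …, a (n-1)` which shares
a common factor with `a (n-2)` and is coprime to `a (n-1)`. -/
def IsYellowstone (a : ℕ → ℕ) : Prop :=
  a 1 = 1 ∧ a 2 = 2 ∧ a 3 = 3 ∧
  ∀ n, 4 ≤ n →
    IsLeast {k : ℕ | 0 < k ∧ (∀ m, 1 ≤ m → m < n → a m ≠ k) ∧
      1 < Nat.gcd k (a (n - 2)) ∧ Nat.gcd k (a (n - 1)) = 1} (a n)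

/-! If `p` divided only finitely many terms, then for large `n` the number `p ^ k * q`, with `q`
the least prime factor of `a n` and `p ^ k` larger than all terms up to the last multiple of `p`,
would be an admissible unused value for `a (n + 2)`. Hence `a (n + 2) ≤ p ^ k * q`, and as `a` is
injective, the least prime factors of the terms tend to infinity. So the terms are eventually odd,
and the same argument with `2 * q` gives `a (n + 2) ≤ 2 * q`. An odd number at most twice the
least prime factor of `a n` that shares a factor with `a n` is a prime factor of `a n`. Thus
eventually `a (n + 2)` is a prime dividing the prime `a n`, i.e. `a (n + 2) = a n`, contradicting
injectivity.
-/

open Filter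

theorem Nat.prime_and_dvd_of_le_two_mul_minFac {x y : ℕ} (hx : ¬ 2 ∣ x)
    (hxy : 1 < Nat.gcd x y) (hle : x ≤ 2 * y.minFac) : x.Prime ∧ x ∣ y := by
  obtain ⟨r, hr, hrx, hry⟩ := Nat.Prime.not_coprime_iff_dvd.1 hxy.ne'
  have hyr : y.minFac ≤ r := Nat.minFac_le_of_dvd hr.two_le hry
  obtain ⟨s, rfl⟩ : ∃ s, x = r * s := hrx
  obtain rfl : s = 1 := by
    rcases Nat.lt_or_ge s 2 with hs | hs
    · interval_cases s
      · simp at hx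
      · rfl
    · -- `r * s ≤ 2 * y.minFac ≤ 2 * r` forces `s = 2`, making `x` even
      obtain rfl : s = 2 :=
        le_antisymm (Nat.le_of_mul_le_mul_left (by linarith : r * s ≤ r * 2) hr.pos) hs
      exact absurd (dvd_mul_left 2 r) hx
  rw [mul_one]
  exact ⟨hr, hry⟩

theorem eventually_not_dvd_of_tendsto_minFac {ι : Type*} {l : Filter ι} {f : ι → ℕ}
    (h : Tendsto (fun i => (f i).minFac) l atTop) {q : ℕ} (hq : 2 ≤ q) :
    ∀ᶠ i in l, ¬ q ∣ f i :=
  (h.eventually_gt_atTop q).mono fun _ hi hdvd => (Nat.minFac_le_of_dvd hq hdvd).not_gt hi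

namespace IsYellowstone

variable {a : ℕ → ℕ}

theorem pos (ha : IsYellowstone a) {n : ℕ} (hn : 1 ≤ n) : 0 < a n := by
  obtain ⟨h1, h2, h3, hrec⟩ := ha
  rcases Nat.lt_or_ge n 4 with h | h
  · interval_cases n <;> norm_num [h1, h2, h3]
  · exact (hrec n h).1.1

theorem ne_of_lt (ha : IsYellowstone a) {m n : ℕ} (hm : 1 ≤ m) (hmn : m < n) : a m ≠ a n := by
  obtain ⟨h1, h2, h3, hrec⟩ := ha
  rcases Nat.lt_or_ge n 4 with h | h
  · interval_cases n <;> interval_cases m <;> simp [h1, h2, h3]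
  · exact (hrec n h).1.2.1 m hm hmn

theorem injOn (ha : IsYellowstone a) : Set.InjOn a (Set.Ici 1) := by
  intro m hm n hn h
  by_contra hne
  rcases Nat.lt_or_gt_of_ne hne with hmn | hnm
  · exact ha.ne_of_lt hm hmn h
  · exact ha.ne_of_lt hn hnm h.symm

theorem ne_one (ha : IsYellowstone a) {n : ℕ} (hn : 2 ≤ n) : a n ≠ 1 := by
  rw [← ha.1]
  exact (ha.ne_of_lt le_rfl hn).symm

theorem coprime_succ (ha : IsYellowstone a) {n : ℕ} (hn : 1 ≤ n) :
    Nat.Coprime (a (n + 1)) (a n) := by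
  obtain ⟨h1, h2, h3, hrec⟩ := ha
  rcases Nat.lt_or_ge n 3 with h | h
  · interval_cases n <;> norm_num [h1, h2, h3]
  · simpa using (hrec (n + 1) (by omega)).1.2.2.2

theorem one_lt_gcd_add_two (ha : IsYellowstone a) {n : ℕ} (hn : 2 ≤ n) :
    1 < Nat.gcd (a (n + 2)) (a n) := by
  simpa using (ha.2.2.2 (n + 2) (by omega)).1.2.2.1

theorem add_two_le_of_candidate (ha : IsYellowstone a) {n k : ℕ} (hn : 2 ≤ n) (hk : 0 < k)
    (hnew : ∀ m, 1 ≤ m → m ≤ n + 1 → a m ≠ k) (hgcd : 1 < Nat.gcd k (a n))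
    (hcop : Nat.Coprime k (a (n + 1))) : a (n + 2) ≤ k :=
  (ha.2.2.2 (n + 2) (by omega)).2
    ⟨hk, fun m hm hmn => hnew m hm (by omega), by simpa using hgcd, by simpa using hcop⟩

theorem tendsto_atTop (ha : IsYellowstone a) : Tendsto a atTop atTop := by
  have hinj : Function.Injective (fun n => a (n + 1)) := fun m n h =>
    Nat.succ_injective (ha.injOn (Nat.le_add_left 1 m) (Nat.le_add_left 1 n) h)
  exact (tendsto_add_atTop_iff_nat 1).1 hinj.nat_tendsto_atTop

theorem add_two_le_pow_mul (ha : IsYellowstone a) {p q k N n : ℕ} (hp : p.Prime)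
    (hN : ∀ m, N ≤ m → ¬ p ∣ a m) (hn : 2 ≤ n) (hNn : N ≤ n + 1) (hk : k ≠ 0)
    (hq : q.Prime) (hqa : q ∣ a n)
    (hbig : ∀ m < N, a m < p ^ k * q) : a (n + 2) ≤ p ^ k * q := by
  have hpos : 0 < p ^ k * q := Nat.mul_pos (pow_pos hp.pos k) hq.pos
  refine ha.add_two_le_of_candidate hn hpos ?_ ?_ ?_
  · intro m _ _ hm
    have hpm : p ∣ a m := hm ▸ (dvd_pow_self p hk).mul_right q
    have hmN : m < N := by
      by_contra h
      exact hN m (not_lt.1 h) hpm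
    exact (hbig m hmN).ne hm
  · have hq_gcd : q ∣ Nat.gcd (p ^ k * q) (a n) := Nat.dvd_gcd (dvd_mul_left q _) hqa
    exact lt_of_lt_of_le hq.one_lt (Nat.le_of_dvd (Nat.gcd_pos_of_pos_left _ hpos) hq_gcd)
  · have hp_cop : Nat.Coprime p (a (n + 1)) := hp.coprime_iff_not_dvd.2 (hN _ hNn)
    have hq_cop : Nat.Coprime q (a (n + 1)) :=
      (Nat.Coprime.coprime_dvd_left hqa (ha.coprime_succ (by omega)).symm)
    exact (hp_cop.pow_left k).mul_left hq_cop

theorem tendsto_minFac (ha : IsYellowstone a) {p : ℕ} (hp : p.Prime)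
    (h : ∀ᶠ m in atTop, ¬ p ∣ a m) : Tendsto (fun n => (a n).minFac) atTop atTop := by
  obtain ⟨N, hN⟩ := eventually_atTop.1 h
  set C := (Finset.range N).sup a
  have hC : ∀ m < N, a m ≤ C := fun m hm => Finset.le_sup (Finset.mem_range.2 hm)
  set P := p ^ (C + 1)
  have hCP : C < P := (Nat.lt_pow_self hp.one_lt).trans_le (Nat.pow_le_pow_right hp.pos C.le_succ)
  have hbound : ∀ n, N + 2 ≤ n → a (n + 2) ≤ P * (a n).minFac := fun n hn =>
    ha.add_two_le_pow_mul hp hN (by omega) (by omega) C.succ_ne_zero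
      (Nat.minFac_prime (ha.ne_one (by omega))) (Nat.minFac_dvd _)
      fun m hm => (hC m hm).trans_lt (hCP.trans_le (Nat.le_mul_of_pos_right _ (Nat.minFac_pos _)))
  refine Filter.tendsto_atTop.2 fun B => ?_
  filter_upwards [eventually_ge_atTop (N + 2),
    ((tendsto_add_atTop_iff_nat 2).2 ha.tendsto_atTop).eventually_ge_atTop (P * B)] with n hn hB
  exact Nat.le_of_mul_le_mul_left (hB.trans (hbound n hn)) (pow_pos hp.pos _)

theorem eventually_add_two_le_two_mul_minFac (ha : IsYellowstone a)
    (h : Tendsto (fun n => (a n).minFac) atTop atTop) :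
    ∀ᶠ n in atTop, a (n + 2) ≤ 2 * (a n).minFac := by
  obtain ⟨N, hN⟩ := eventually_atTop.1 (eventually_not_dvd_of_tendsto_minFac h le_rfl)
  set C := (Finset.range N).sup a
  have hC : ∀ m < N, a m ≤ C := fun m hm => Finset.le_sup (Finset.mem_range.2 hm)
  filter_upwards [eventually_ge_atTop (N + 2), h.eventually_gt_atTop C] with n hn hq
  simpa using ha.add_two_le_pow_mul Nat.prime_two hN (k := 1) (by omega) (by omega) one_ne_zero
    (Nat.minFac_prime (ha.ne_one (by omega))) (Nat.minFac_dvd _)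
    fun m hm => by linarith [hC m hm]

end IsYellowstone

theorem yellowstone_infinitely_many_multiples (a : ℕ → ℕ) (ha : IsYellowstone a)
    (p : ℕ) (hp : p.Prime) : {n : ℕ | 1 ≤ n ∧ p ∣ a n}.Infinite := by
  by_contra hfin
  have hp_eventually : ∀ᶠ n in atTop, ¬ p ∣ a n := by
    rw [← Nat.frequently_atTop_iff_infinite, not_frequently] at hfin
    filter_upwards [hfin, eventually_ge_atTop 1] with n hn h1 hpn using hn ⟨h1, hpn⟩
  have hmin := ha.tendsto_minFac hp hp_eventually
  have hodd_add_two :=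
    (tendsto_add_atTop_nat 2).eventually (eventually_not_dvd_of_tendsto_minFac hmin le_rfl)
  have hprime : ∀ᶠ n in atTop, (a (n + 2)).Prime ∧ a (n + 2) ∣ a n := by
    filter_upwards [ha.eventually_add_two_le_two_mul_minFac hmin, hodd_add_two,
      eventually_ge_atTop 2] with n hle hodd hn
    exact Nat.prime_and_dvd_of_le_two_mul_minFac hodd (ha.one_lt_gcd_add_two hn) hle
  obtain ⟨N, hN⟩ := eventually_atTop.1 hprime
  obtain ⟨hprime₄, hdvd⟩ := hN (N + 2) (N.le_add_right 2)
  have heq : a (N + 4) = a (N + 2) :=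
    (Nat.prime_dvd_prime_iff_eq hprime₄ (hN N le_rfl).1).1 hdvd
  exact ha.ne_of_lt (by omega) (by omega : N + 2 < N + 4) heq.symm
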